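/- Let c ≥ 0 and let ν be a (nonnegative Borel) measure on (0,1] with ∫_{(0,1]} y² ν(dy) < ∞. For f : ℝ → ℝ twice continuously differentiable on a neighborhood of [0,1], define the Generalized Fleming–Viot generator Gf(x) = (c/2) x(1-x) f''(x) + ∫_{(0,1]} [ x (f(x+y(1-x)) - f(x)) + (1-x)(f(x(1-y)) - f(x)) ] ν(dy) for x ∈ [0,1], define G⁰f(x) = c(1-2x) f'(x) + ∫_{(0,1]} y(1-y) [ f(x+y(1-x)) - 2 f(x) + f(x(1-y)) ] ν(dy), and define G¹f(x) = (c/2) x(1-x) f''(x) + ∫_{(0,1]} (1-y)² [ x (f(x+y(1-x)) - f(x)) + (1-x)(f(x(1-y)) - f(x)) ] ν(dy). Set H(x) = x(1-x) and r₂ = c + ∫_{(0,1]} y² ν(dy). Then all these integrals are finite and for every x ∈ (0,1), G(H·f)(x)/H(x) + r₂ f(x) = G⁰f(x) + G¹f(x). -/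

import Mathlib

/-!
With `H(x) = x(1-x)` everything reduces to two product-rule computations. For the diffusion,
`(Hf)'' = -2f + 2(1-2x)f' + Hf''`, which produces the drift of `G⁰`, the diffusion of `G¹` and
the `c` in `r₂`. For the jumps, with `a = x + y(1-x)` and `b = x(1-y)`, the integrand of
`G(Hf)` equals pointwise
`H(x) [y(1-y)(f(a) - 2f(x) + f(b)) + (1-y)² (x(f(a)-f(x)) + (1-x)(f(b)-f(x))) - y² f(x)]`,
which produces the jump parts of `G⁰` and `G¹` and the `∫ y² ν(dy)` in `r₂`.

Finiteness of the integrals: since `x(a-x) + (1-x)(b-x) = 0`, the first-order Taylor terms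
cancel in the jump integrand, which is therefore `O(y²)` for `f ∈ C²`; the second difference
`f(a) - 2f(x) + f(b)` is `O(y)` because `f` is Lipschitz. Both are then dominated by `y²`.
-/

open MeasureTheory Set

/-- The Generalized Fleming–Viot generator (two types, no mutation):
`Gg(x) = (c/2)x(1-x)g''(x) + ∫ [x(g(x+y(1-x))-g(x)) + (1-x)(g(x(1-y))-g(x))] ν(dy)`. -/
noncomputable def GFVgen (c : ℝ) (ν : Measure ℝ) (g : ℝ → ℝ) (x : ℝ) : ℝ :=
  c / 2 * (x * (1 - x)) * deriv (deriv g) x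
    + ∫ y in Ioc (0 : ℝ) 1,
        (x * (g (x + y * (1 - x)) - g x) + (1 - x) * (g (x * (1 - y)) - g x)) ∂ν

/-- The immigration part `G⁰`. -/
noncomputable def GFV_G0 (c : ℝ) (ν : Measure ℝ) (f : ℝ → ℝ) (x : ℝ) : ℝ :=
  c * (1 - 2 * x) * deriv f x
    + ∫ y in Ioc (0 : ℝ) 1,
        y * (1 - y) * (f (x + y * (1 - x)) - 2 * f x + f (x * (1 - y))) ∂ν

/-- The reduced-reproduction part `G¹`. -/
noncomputable def GFV_G1 (c : ℝ) (ν : Measure ℝ) (f : ℝ → ℝ) (x : ℝ) : ℝ :=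
  c / 2 * (x * (1 - x)) * deriv (deriv f) x
    + ∫ y in Ioc (0 : ℝ) 1,
        (1 - y) ^ 2 *
          (x * (f (x + y * (1 - x)) - f x) + (1 - x) * (f (x * (1 - y)) - f x)) ∂ν

open Filter
open scoped NNReal Topology

noncomputable def gfvJump (g : ℝ → ℝ) (x y : ℝ) : ℝ :=
  x * (g (x + y * (1 - x)) - g x) + (1 - x) * (g (x * (1 - y)) - g x)

lemma GFVgen_eq (c : ℝ) (ν : Measure ℝ) (g : ℝ → ℝ) (x : ℝ) :
    GFVgen c ν g x = c / 2 * (x * (1 - x)) * deriv (deriv g) x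
      + ∫ y in Ioc (0 : ℝ) 1, gfvJump g x y ∂ν := rfl

lemma GFV_G1_eq (c : ℝ) (ν : Measure ℝ) (f : ℝ → ℝ) (x : ℝ) :
    GFV_G1 c ν f x = c / 2 * (x * (1 - x)) * deriv (deriv f) x
      + ∫ y in Ioc (0 : ℝ) 1, (1 - y) ^ 2 * gfvJump f x y ∂ν := rfl

lemma add_mul_one_sub_mem_Icc {x y : ℝ} (hx : x ∈ Icc (0 : ℝ) 1) (hy : y ∈ Icc (0 : ℝ) 1) :
    x + y * (1 - x) ∈ Icc (0 : ℝ) 1 :=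
  ⟨by nlinarith [hx.1, hx.2, hy.1, hy.2], by nlinarith [hx.1, hx.2, hy.1, hy.2]⟩

lemma mul_one_sub_mem_Icc {x y : ℝ} (hx : x ∈ Icc (0 : ℝ) 1) (hy : y ∈ Icc (0 : ℝ) 1) :
    x * (1 - y) ∈ Icc (0 : ℝ) 1 :=
  ⟨by nlinarith [hx.1, hx.2, hy.1, hy.2], by nlinarith [hx.1, hx.2, hy.1, hy.2]⟩

lemma abs_sub_sub_deriv_mul_le_of_lipschitzOnWith_deriv {g : ℝ → ℝ} {s : Set ℝ} {K : ℝ≥0}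
    (hs : Convex ℝ s) (hg : ∀ t ∈ s, DifferentiableAt ℝ g t)
    (hg' : LipschitzOnWith K (deriv g) s) {x a : ℝ} (hx : x ∈ s) (ha : a ∈ s) :
    |g a - g x - deriv g x * (a - x)| ≤ K * (a - x) ^ 2 := by
  have hxa : uIcc x a ⊆ s := hs.ordConnected.uIcc_subset hx ha
  have hderiv : ∀ t ∈ uIcc x a, HasDerivWithinAt (fun t => g t - g x - deriv g x * (t - x))
      (deriv g t - deriv g x) (uIcc x a) t := fun t ht =>
    ((((hg t (hxa ht)).hasDerivAt.sub_const (g x)).sub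
      (((hasDerivAt_id t).sub_const x).const_mul (deriv g x))).congr_deriv
        (by ring)).hasDerivWithinAt
  have hbound : ∀ t ∈ uIcc x a, ‖deriv g t - deriv g x‖ ≤ K * |a - x| := fun t ht =>
    calc ‖deriv g t - deriv g x‖ ≤ K * |t - x| := by
          simpa [Real.norm_eq_abs, Real.dist_eq] using hg'.dist_le_mul t (hxa ht) x hx
      _ ≤ K * |a - x| := mul_le_mul_of_nonneg_left (abs_sub_left_of_mem_uIcc ht) K.2
  simpa [Real.norm_eq_abs, ← sq_abs (a - x), sq, mul_assoc] using
    (convex_uIcc x a).norm_image_sub_le_of_norm_hasDerivWithin_le hderiv hbound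
      left_mem_uIcc right_mem_uIcc

lemma abs_gfvJump_le {g : ℝ → ℝ} {K : ℝ≥0}
    (hg : ∀ t ∈ Icc (0 : ℝ) 1, DifferentiableAt ℝ g t)
    (hg' : LipschitzOnWith K (deriv g) (Icc 0 1)) {x y : ℝ} (hx : x ∈ Icc (0 : ℝ) 1)
    (hy : y ∈ Icc (0 : ℝ) 1) :
    |gfvJump g x y| ≤ K * y ^ 2 := by
  obtain ⟨hx0, hx1⟩ := id hx
  have taylor (a : ℝ) (ha : a ∈ Icc (0 : ℝ) 1) :=
    abs_sub_sub_deriv_mul_le_of_lipschitzOnWith_deriv (convex_Icc 0 1) hg hg' hx ha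
  have hRa := taylor _ (add_mul_one_sub_mem_Icc hx hy)
  have hRb := taylor _ (mul_one_sub_mem_Icc hx hy)
  rw [add_sub_cancel_left] at hRa
  rw [show x * (1 - y) - x = -(x * y) by ring, neg_sq] at hRb
  set Ra := g (x + y * (1 - x)) - g x - deriv g x * (y * (1 - x))
  set Rb := g (x * (1 - y)) - g x - deriv g x * -(x * y)
  have hsplit : gfvJump g x y = x * Ra + (1 - x) * Rb := by
    simp only [gfvJump, Ra, Rb]; ring
  calc |gfvJump g x y| ≤ x * |Ra| + (1 - x) * |Rb| := by
        rw [hsplit]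
        refine (abs_add_le _ _).trans_eq ?_
        rw [abs_mul, abs_mul, abs_of_nonneg hx0, abs_of_nonneg (sub_nonneg.2 hx1)]
    _ ≤ x * (K * (y * (1 - x)) ^ 2) + (1 - x) * (K * (x * y) ^ 2) := by gcongr
    _ = K * y ^ 2 * (x * (1 - x)) := by ring
    _ ≤ K * y ^ 2 := by
        refine mul_le_of_le_one_right (by positivity) ?_
        nlinarith

lemma abs_mul_second_difference_le {f : ℝ → ℝ} {L : ℝ≥0} (hf : LipschitzOnWith L f (Icc 0 1))
    {x y : ℝ} (hx : x ∈ Icc (0 : ℝ) 1) (hy : y ∈ Icc (0 : ℝ) 1) :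
    |y * (1 - y) * (f (x + y * (1 - x)) - 2 * f x + f (x * (1 - y)))| ≤ L * y ^ 2 := by
  have ha := hf.dist_le_mul _ (add_mul_one_sub_mem_Icc hx hy) x hx
  have hb := hf.dist_le_mul _ (mul_one_sub_mem_Icc hx hy) x hx
  simp only [Real.dist_eq, add_sub_cancel_left] at ha hb
  rw [show x * (1 - y) - x = -(x * y) by ring, abs_neg,
    abs_of_nonneg (mul_nonneg hx.1 hy.1)] at hb
  rw [abs_of_nonneg (mul_nonneg hy.1 (sub_nonneg.2 hx.2))] at ha
  have hdiff : |f (x + y * (1 - x)) - 2 * f x + f (x * (1 - y))| ≤ L * y :=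
    calc |f (x + y * (1 - x)) - 2 * f x + f (x * (1 - y))|
        ≤ |f (x + y * (1 - x)) - f x| + |f (x * (1 - y)) - f x| := by
          rw [show f (x + y * (1 - x)) - 2 * f x + f (x * (1 - y))
            = (f (x + y * (1 - x)) - f x) + (f (x * (1 - y)) - f x) by ring]
          exact abs_add_le _ _
      _ ≤ L * (y * (1 - x)) + L * (x * y) := add_le_add ha hb
      _ = L * y := by ring
  have hw : 0 ≤ y * (1 - y) := mul_nonneg hy.1 (sub_nonneg.2 hy.2)
  calc |y * (1 - y) * (f (x + y * (1 - x)) - 2 * f x + f (x * (1 - y)))|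
      ≤ y * (1 - y) * (L * y) := by
        rw [abs_mul, abs_of_nonneg hw]
        exact mul_le_mul_of_nonneg_left hdiff hw
    _ ≤ L * y ^ 2 := by nlinarith [mul_nonneg (mul_nonneg L.coe_nonneg (sq_nonneg y)) hy.1]

lemma abs_one_sub_sq_mul_gfvJump_le {g : ℝ → ℝ} {K : ℝ≥0}
    (hg : ∀ t ∈ Icc (0 : ℝ) 1, DifferentiableAt ℝ g t)
    (hg' : LipschitzOnWith K (deriv g) (Icc 0 1)) {x y : ℝ} (hx : x ∈ Icc (0 : ℝ) 1)
    (hy : y ∈ Icc (0 : ℝ) 1) :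
    |(1 - y) ^ 2 * gfvJump g x y| ≤ K * y ^ 2 := by
  rw [abs_mul, abs_of_nonneg (sq_nonneg _)]
  refine mul_le_of_le_one_left (abs_nonneg _) ?_ |>.trans (abs_gfvJump_le hg hg' hx hy)
  nlinarith [hy.1, hy.2]

lemma integrableOn_of_abs_le_mul_sq {ν : Measure ℝ} {s : Set ℝ} {F : ℝ → ℝ} {C : ℝ}
    (hν : IntegrableOn (fun y => y ^ 2) s ν) (hs : MeasurableSet s) (hF : ContinuousOn F s)
    (hbound : ∀ y ∈ s, |F y| ≤ C * y ^ 2) : IntegrableOn F s ν :=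
  (hν.const_mul C).mono' (hF.aestronglyMeasurable hs)
    ((ae_restrict_iff' hs).2 (Eventually.of_forall hbound))

lemma continuousOn_comp_add_mul_one_sub {f : ℝ → ℝ} (hf : ContinuousOn f (Icc 0 1)) {x : ℝ}
    (hx : x ∈ Icc (0 : ℝ) 1) : ContinuousOn (fun y => f (x + y * (1 - x))) (Icc 0 1) :=
  hf.comp (by fun_prop) fun _ hy => add_mul_one_sub_mem_Icc hx hy

lemma continuousOn_comp_mul_one_sub {f : ℝ → ℝ} (hf : ContinuousOn f (Icc 0 1)) {x : ℝ}
    (hx : x ∈ Icc (0 : ℝ) 1) : ContinuousOn (fun y => f (x * (1 - y))) (Icc 0 1) :=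
  hf.comp (by fun_prop) fun _ hy => mul_one_sub_mem_Icc hx hy

lemma deriv_deriv_mul_one_sub_mul {f : ℝ → ℝ} {x : ℝ}
    (hf : ∀ᶠ z in 𝓝 x, DifferentiableAt ℝ f z) (hf' : DifferentiableAt ℝ (deriv f) x) :
    deriv (deriv fun z => z * (1 - z) * f z) x
      = -2 * f x + 2 * (1 - 2 * x) * deriv f x + x * (1 - x) * deriv (deriv f) x := by
  have hH (z : ℝ) : HasDerivAt (fun w : ℝ => w * (1 - w)) (1 - 2 * z) z :=
    ((hasDerivAt_id' z).mul ((hasDerivAt_id' z).const_sub 1)).congr_deriv (by ring)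
  have hfirst : (deriv fun z => z * (1 - z) * f z)
      =ᶠ[𝓝 x] fun z => (1 - 2 * z) * f z + z * (1 - z) * deriv f z :=
    hf.mono fun z hz => ((hH z).mul hz.hasDerivAt).deriv
  have hlin : HasDerivAt (fun z : ℝ => 1 - 2 * z) (-2) x := by
    simpa using ((hasDerivAt_id x).const_mul 2).const_sub 1
  have hsecond : HasDerivAt (fun z => (1 - 2 * z) * f z + z * (1 - z) * deriv f z)
      (-2 * f x + 2 * (1 - 2 * x) * deriv f x + x * (1 - x) * deriv (deriv f) x) x :=
    ((hlin.mul hf.self_of_nhds.hasDerivAt).add ((hH x).mul hf'.hasDerivAt)).congr_deriv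
      (by ring)
  rw [hfirst.deriv_eq, hsecond.deriv]

lemma gfvJump_mul_one_sub_mul (f : ℝ → ℝ) (x y : ℝ) :
    gfvJump (fun z => z * (1 - z) * f z) x y
      = x * (1 - x) * (y * (1 - y) * (f (x + y * (1 - x)) - 2 * f x + f (x * (1 - y)))
          + (1 - y) ^ 2 * gfvJump f x y - f x * y ^ 2) := by
  simp only [gfvJump]
  ring

section Integrals

variable {ν : Measure ℝ} {s : Set ℝ} {f : ℝ → ℝ} {x : ℝ}

lemma integrableOn_mul_second_difference {L : ℝ≥0} (hν : IntegrableOn (fun y => y ^ 2) s ν)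
    (hs : MeasurableSet s) (hsI : s ⊆ Icc 0 1) (hf : LipschitzOnWith L f (Icc 0 1))
    (hx : x ∈ Icc (0 : ℝ) 1) :
    IntegrableOn
      (fun y => y * (1 - y) * (f (x + y * (1 - x)) - 2 * f x + f (x * (1 - y)))) s ν := by
  refine integrableOn_of_abs_le_mul_sq hν hs (ContinuousOn.mono ?_ hsI)
    fun y hy => abs_mul_second_difference_le hf hx (hsI hy)
  have hdiff : ContinuousOn (fun y => f (x + y * (1 - x)) - 2 * f x + f (x * (1 - y))) (Icc 0 1) :=
    ((continuousOn_comp_add_mul_one_sub hf.continuousOn hx).sub continuousOn_const).add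
      (continuousOn_comp_mul_one_sub hf.continuousOn hx)
  exact (by fun_prop : Continuous fun y : ℝ => y * (1 - y)).continuousOn.mul hdiff

lemma integrableOn_one_sub_sq_mul_gfvJump {K : ℝ≥0} (hν : IntegrableOn (fun y => y ^ 2) s ν)
    (hs : MeasurableSet s) (hsI : s ⊆ Icc 0 1)
    (hf : ∀ t ∈ Icc (0 : ℝ) 1, DifferentiableAt ℝ f t)
    (hf' : LipschitzOnWith K (deriv f) (Icc 0 1)) (hx : x ∈ Icc (0 : ℝ) 1) :
    IntegrableOn (fun y => (1 - y) ^ 2 * gfvJump f x y) s ν := by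
  refine integrableOn_of_abs_le_mul_sq hν hs (ContinuousOn.mono ?_ hsI)
    fun y hy => abs_one_sub_sq_mul_gfvJump_le hf hf' hx (hsI hy)
  have hfc : ContinuousOn f (Icc 0 1) := fun t ht => (hf t ht).continuousAt.continuousWithinAt
  have hjump : ContinuousOn (gfvJump f x) (Icc 0 1) :=
    (continuousOn_const.mul ((continuousOn_comp_add_mul_one_sub hfc hx).sub continuousOn_const)).add
      (continuousOn_const.mul ((continuousOn_comp_mul_one_sub hfc hx).sub continuousOn_const))
  exact (by fun_prop : Continuous fun y : ℝ => (1 - y) ^ 2).continuousOn.mul hjump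

lemma integrableOn_gfvJump_mul_one_sub_mul (hν : IntegrableOn (fun y => y ^ 2) s ν)
    (h₀ : IntegrableOn
      (fun y => y * (1 - y) * (f (x + y * (1 - x)) - 2 * f x + f (x * (1 - y)))) s ν)
    (h₁ : IntegrableOn (fun y => (1 - y) ^ 2 * gfvJump f x y) s ν) :
    IntegrableOn (gfvJump (fun z => z * (1 - z) * f z) x) s ν := by
  rw [funext (gfvJump_mul_one_sub_mul f x)]
  exact ((h₀.add h₁).sub (hν.const_mul (f x))).const_mul (x * (1 - x))

lemma setIntegral_gfvJump_mul_one_sub_mul (hν : IntegrableOn (fun y => y ^ 2) s ν)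
    (h₀ : IntegrableOn
      (fun y => y * (1 - y) * (f (x + y * (1 - x)) - 2 * f x + f (x * (1 - y)))) s ν)
    (h₁ : IntegrableOn (fun y => (1 - y) ^ 2 * gfvJump f x y) s ν) :
    ∫ y in s, gfvJump (fun z => z * (1 - z) * f z) x y ∂ν
      = x * (1 - x) *
          ((∫ y in s, y * (1 - y) * (f (x + y * (1 - x)) - 2 * f x + f (x * (1 - y))) ∂ν)
            + (∫ y in s, (1 - y) ^ 2 * gfvJump f x y ∂ν) - f x * ∫ y in s, y ^ 2 ∂ν) := by
  simp_rw [gfvJump_mul_one_sub_mul]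
  rw [integral_const_mul, integral_sub, integral_add h₀ h₁, integral_const_mul]
  exacts [h₀.add h₁, hν.const_mul (f x)]

end Integrals

theorem gfv_coexistence_generator_decomposition_general
    (c : ℝ) (ν : Measure ℝ)
    (hν : IntegrableOn (fun y => y ^ 2) (Ioc (0 : ℝ) 1) ν)
    (f : ℝ → ℝ) (U : Set ℝ) (hU : IsOpen U) (hUI : Icc (0 : ℝ) 1 ⊆ U)
    (hf : ContDiffOn ℝ 2 f U) :
    ∀ x ∈ Ioo (0 : ℝ) 1,
      IntegrableOn
        (fun y =>
          x * ((fun z => z * (1 - z) * f z) (x + y * (1 - x)) - (fun z => z * (1 - z) * f z) x)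
            + (1 - x) * ((fun z => z * (1 - z) * f z) (x * (1 - y))
                - (fun z => z * (1 - z) * f z) x))
        (Ioc (0 : ℝ) 1) ν ∧
      IntegrableOn
        (fun y => y * (1 - y) * (f (x + y * (1 - x)) - 2 * f x + f (x * (1 - y))))
        (Ioc (0 : ℝ) 1) ν ∧
      IntegrableOn
        (fun y => (1 - y) ^ 2 *
          (x * (f (x + y * (1 - x)) - f x) + (1 - x) * (f (x * (1 - y)) - f x)))
        (Ioc (0 : ℝ) 1) ν ∧
      GFVgen c ν (fun z => z * (1 - z) * f z) x / (x * (1 - x))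
          + (c + ∫ y in Ioc (0 : ℝ) 1, y ^ 2 ∂ν) * f x
        = GFV_G0 c ν f x + GFV_G1 c ν f x := by
  rintro x ⟨hx₀, hx₁⟩
  have hx : x ∈ Icc (0 : ℝ) 1 := ⟨hx₀.le, hx₁.le⟩
  have hdiff (t : ℝ) (ht : t ∈ U) : DifferentiableAt ℝ f t :=
    (hf.differentiableOn two_ne_zero t ht).differentiableAt (hU.mem_nhds ht)
  have hf' : ContDiffOn ℝ 1 (deriv f) U := hf.deriv_of_isOpen hU (by norm_num)
  obtain ⟨L, hL⟩ :=
    (hf.mono hUI).exists_lipschitzOnWith two_ne_zero (convex_Icc 0 1) isCompact_Icc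
  obtain ⟨K, hK⟩ :=
    (hf'.mono hUI).exists_lipschitzOnWith one_ne_zero (convex_Icc 0 1) isCompact_Icc
  have hdiffI (t : ℝ) (ht : t ∈ Icc (0 : ℝ) 1) := hdiff t (hUI ht)
  have h₀ := integrableOn_mul_second_difference hν measurableSet_Ioc Ioc_subset_Icc_self hL hx
  have h₁ := integrableOn_one_sub_sq_mul_gfvJump hν measurableSet_Ioc Ioc_subset_Icc_self
    hdiffI hK hx
  refine ⟨integrableOn_gfvJump_mul_one_sub_mul hν h₀ h₁, h₀, h₁, ?_⟩
  have hH : x * (1 - x) ≠ 0 := (mul_pos hx₀ (sub_pos.2 hx₁)).ne'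
  have hUx : U ∈ 𝓝 x := hU.mem_nhds (hUI hx)
  rw [GFVgen_eq, GFV_G1_eq, GFV_G0, setIntegral_gfvJump_mul_one_sub_mul hν h₀ h₁,
    deriv_deriv_mul_one_sub_mul (eventually_of_mem hUx hdiff)
      ((hf'.differentiableOn one_ne_zero x (hUI hx)).differentiableAt hUx)]
  field_simp
  ring

/-- Decomposition of the generator of the Generalized Fleming–Viot process conditioned on
coexistence of both types: with `H(x) = x(1-x)` and `r₂ = c + ∫ y² ν(dy)`, one has
`G(H·f)(x)/H(x) + r₂ f(x) = G⁰f(x) + G¹f(x)` on `(0,1)`, all integrals being finite. -/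
theorem gfv_coexistence_generator_decomposition
    (c : ℝ) (hc : 0 ≤ c) (ν : Measure ℝ)
    (hν : IntegrableOn (fun y => y ^ 2) (Ioc (0 : ℝ) 1) ν)
    (f : ℝ → ℝ) (U : Set ℝ) (hU : IsOpen U) (hUI : Icc (0 : ℝ) 1 ⊆ U)
    (hf : ContDiffOn ℝ 2 f U) :
    ∀ x ∈ Ioo (0 : ℝ) 1,
      IntegrableOn
        (fun y =>
          x * ((fun z => z * (1 - z) * f z) (x + y * (1 - x)) - (fun z => z * (1 - z) * f z) x)
            + (1 - x) * ((fun z => z * (1 - z) * f z) (x * (1 - y))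
                - (fun z => z * (1 - z) * f z) x))
        (Ioc (0 : ℝ) 1) ν ∧
      IntegrableOn
        (fun y => y * (1 - y) * (f (x + y * (1 - x)) - 2 * f x + f (x * (1 - y))))
        (Ioc (0 : ℝ) 1) ν ∧
      IntegrableOn
        (fun y => (1 - y) ^ 2 *
          (x * (f (x + y * (1 - x)) - f x) + (1 - x) * (f (x * (1 - y)) - f x)))
        (Ioc (0 : ℝ) 1) ν ∧
      GFVgen c ν (fun z => z * (1 - z) * f z) x / (x * (1 - x))
          + (c + ∫ y in Ioc (0 : ℝ) 1, y ^ 2 ∂ν) * f x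
        = GFV_G0 c ν f x + GFV_G1 c ν f x :=
  gfv_coexistence_generator_decomposition_general c ν hν f U hU hUI hf
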